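/- Let λ be Lebesgue measure on [0,1] and let 𝒞 = ⋃_{n≥1} 𝒞_n. For every n ≥ 1, the set of samples (x₁,…,xₙ) ∈ [0,1]ⁿ for which sup_{C∈𝒞} |λ(C) − (1/n)·|{i : xᵢ ∈ C}|| ≥ 1/2 has λ^⊗n-outer measure 1. Consequently 𝒞 is not Glivenko–Cantelli with respect to λ. -/

import Mathlib

open MeasureTheory Filter

/-- The `n`-fold product (i.i.d.) measure on `Fin n → Ω`. -/
noncomputable def prodMeas {Ω : Type*} [MeasurableSpace Ω] (μ : Measure Ω) (n : ℕ) :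
    Measure (Fin n → Ω) := Measure.pi fun _ => μ

/-- Empirical frequency of a concept `C` on a sample `x` of size `n`. -/
noncomputable def empFreq {Ω : Type*} (C : Set Ω) {n : ℕ} (x : Fin n → Ω) : ℝ :=
  (Finset.univ.filter fun i => @decide (x i ∈ C) (Classical.propDecidable _) = true).card / n

/-- The concept class `𝒞` is Glivenko–Cantelli with respect to `μ`. -/
def IsGC {Ω : Type*} [MeasurableSpace Ω] (μ : Measure Ω) (𝒞 : Set (Set Ω)) : Prop :=
  ∀ ε : ℝ, 0 < ε →
    Tendsto (fun n => prodMeas μ n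
      {x | ε ≤ ⨆ C ∈ 𝒞, |(μ C).toReal - empFreq C x|}) atTop (nhds 0)

/-- `IntClass n`: unions of fewer than `√n` closed intervals `[i/n, (i+1)/n]`,
`0 ≤ i ≤ n - 1` (intervals of order `n`), including the empty union. -/
def IntClass (n : ℕ) : Set (Set ℝ) :=
  {C | ∃ s : Finset ℕ, s ⊆ Finset.range n ∧ (s.card : ℝ) < Real.sqrt n ∧
    C = ⋃ i ∈ s, Set.Icc ((i : ℝ) / n) (((i : ℝ) + 1) / n)}

/-- `IntClassAll = ⋃_{n ≥ 1} IntClass n`. -/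
def IntClassAll : Set (Set ℝ) := {C | ∃ n : ℕ, 1 ≤ n ∧ C ∈ IntClass n}

/-!
Whatever the sample `x₁, …, xₙ ∈ [0,1]`, choose a resolution `m` with `n < √m` and `n / m ≤ 1/2`
(e.g. `m = 2 (n + 1)²`). The at most `n` intervals of order `m` containing the sample points form
a concept `C ∈ 𝒞_m` of Lebesgue measure at most `n / m ≤ 1/2` but empirical frequency `1`. So the
deviation is at least `1/2` on every sample in the box `[0,1]ⁿ`, which has full measure; in
particular the deviation probabilities are `1`, not tending to `0`.
-/

open Set

section EmpiricalDeviation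

variable {Ω : Type*} {n : ℕ}

lemma empFreq_nonneg (C : Set Ω) (x : Fin n → Ω) : 0 ≤ empFreq C x := by
  unfold empFreq
  positivity

lemma empFreq_le_one (C : Set Ω) (x : Fin n → Ω) : empFreq C x ≤ 1 := by
  unfold empFreq
  refine div_le_one_of_le₀ ?_ n.cast_nonneg
  exact_mod_cast (Finset.card_filter_le _ _).trans_eq (Finset.card_fin n)

lemma empFreq_eq_one (hn : n ≠ 0) {C : Set Ω} {x : Fin n → Ω} (hx : ∀ i, x i ∈ C) :
    empFreq C x = 1 := by
  unfold empFreq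
  rw [Finset.filter_true_of_mem fun i _ =>
      @decide_eq_true _ (Classical.propDecidable _) (hx i),
    Finset.card_univ, Fintype.card_fin]
  exact div_self (Nat.cast_ne_zero.mpr hn)

variable [MeasurableSpace Ω] (μ : Measure Ω) [IsProbabilityMeasure μ]

lemma abs_toReal_sub_empFreq_le_one (C : Set Ω) (x : Fin n → Ω) :
    |(μ C).toReal - empFreq C x| ≤ 1 := by
  have hμ : (μ C).toReal ≤ 1 := measureReal_le_one
  rw [abs_le]
  constructor <;>
    linarith [ENNReal.toReal_nonneg (a := μ C), empFreq_nonneg C x, empFreq_le_one C x]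

lemma le_iSup_abs_toReal_sub_empFreq {𝒞 : Set (Set Ω)} {C : Set Ω} (hC : C ∈ 𝒞)
    (x : Fin n → Ω) :
    |(μ C).toReal - empFreq C x| ≤ ⨆ D ∈ 𝒞, |(μ D).toReal - empFreq D x| := by
  refine le_ciSup₂ (f := fun D (_ : D ∈ 𝒞) => |(μ D).toReal - empFreq D x|) ⟨1, ?_⟩ C hC
  rintro _ ⟨_, ⟨D, rfl⟩, _, rfl⟩
  exact abs_toReal_sub_empFreq_le_one μ D x

end EmpiricalDeviation

lemma exists_lt_mem_Icc_div {m : ℕ} (hm : 0 < m) {t : ℝ} (ht : t ∈ Icc (0 : ℝ) 1) :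
    ∃ i < m, t ∈ Icc ((i : ℝ) / m) (((i : ℝ) + 1) / m) := by
  obtain ⟨ht0, ht1⟩ := ht
  have hm0 : (0 : ℝ) < m := by exact_mod_cast hm
  have hfloor : (⌊t * m⌋₊ : ℝ) ≤ t * m := Nat.floor_le (by positivity)
  by_cases hlt : ⌊t * m⌋₊ < m
  · refine ⟨⌊t * m⌋₊, hlt, ?_, ?_⟩
    · rw [div_le_iff₀ hm0]
      exact hfloor
    · rw [le_div_iff₀ hm0]
      exact (Nat.lt_floor_add_one (t * m)).le
  · refine ⟨m - 1, Nat.sub_lt hm one_pos, ?_, ?_⟩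
    · have hm_le : (m : ℝ) ≤ ⌊t * m⌋₊ := by exact_mod_cast not_lt.mp hlt
      rw [div_le_iff₀ hm0, Nat.cast_pred hm]
      linarith
    · rw [Nat.cast_pred hm, sub_add_cancel, div_self hm0.ne']
      exact ht1

lemma volume_biUnion_Icc_div_le (m : ℕ) (s : Finset ℕ) :
    volume (⋃ i ∈ s, Icc ((i : ℝ) / m) (((i : ℝ) + 1) / m)) ≤ ENNReal.ofReal (s.card / m) :=
  calc volume (⋃ i ∈ s, Icc ((i : ℝ) / m) (((i : ℝ) + 1) / m))
      ≤ ∑ i ∈ s, volume (Icc ((i : ℝ) / m) (((i : ℝ) + 1) / m)) :=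
        measure_biUnion_finset_le _ _
    _ = ∑ _i ∈ s, ENNReal.ofReal (1 / m) := by
        refine Finset.sum_congr rfl fun i _ => ?_
        rw [Real.volume_Icc, add_div, add_sub_cancel_left]
    _ = ENNReal.ofReal (s.card / m) := by
        rw [Finset.sum_const, ← ENNReal.ofReal_nsmul, nsmul_eq_mul, mul_one_div]

lemma exists_mem_intClassAll_forall_mem_volume_le {n : ℕ} {x : Fin n → ℝ}
    (hx : ∀ i, x i ∈ Icc (0 : ℝ) 1) :
    ∃ C ∈ IntClassAll, (∀ i, x i ∈ C) ∧ volume C ≤ ENNReal.ofReal (1 / 2) := by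
  set m : ℕ := 2 * (n + 1) ^ 2 with hm_def
  have hm : 0 < m := by positivity
  have hm_cast : (m : ℝ) = 2 * ((n : ℝ) + 1) ^ 2 := by push_cast [hm_def]; ring
  choose cell hcell_lt hmem_cell using fun i => exists_lt_mem_Icc_div hm (hx i)
  set s : Finset ℕ := Finset.univ.image cell
  have hcard : (s.card : ℝ) ≤ n := by
    exact_mod_cast Finset.card_image_le.trans_eq (Finset.card_fin n)
  refine ⟨⋃ i ∈ s, Icc ((i : ℝ) / m) (((i : ℝ) + 1) / m), ⟨m, hm, s, ?_, ?_, rfl⟩, ?_, ?_⟩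
  · intro k hk
    obtain ⟨i, -, rfl⟩ := Finset.mem_image.mp hk
    exact Finset.mem_range.mpr (hcell_lt i)
  · refine hcard.trans_lt ?_
    rw [hm_cast, Real.lt_sqrt n.cast_nonneg]
    nlinarith
  · exact fun i => mem_biUnion (Finset.mem_image_of_mem _ (Finset.mem_univ i)) (hmem_cell i)
  · refine (volume_biUnion_Icc_div_le m s).trans (ENNReal.ofReal_le_ofReal ?_)
    rw [div_le_div_iff₀ (by positivity) two_pos, hm_cast]
    nlinarith

instance isProbabilityMeasure_restrict_Icc_zero_one :
    IsProbabilityMeasure (volume.restrict (Icc (0 : ℝ) 1)) :=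
  ⟨by simp [Real.volume_Icc]⟩

lemma half_le_iSup_abs_toReal_sub_empFreq {n : ℕ} (hn : n ≠ 0) {x : Fin n → ℝ}
    (hx : ∀ i, x i ∈ Icc (0 : ℝ) 1) :
    (1 : ℝ) / 2 ≤ ⨆ C ∈ IntClassAll,
      |((volume.restrict (Icc (0 : ℝ) 1)) C).toReal - empFreq C x| := by
  obtain ⟨C, hC, hxC, hvol⟩ := exists_mem_intClassAll_forall_mem_volume_le hx
  have hμC : ((volume.restrict (Icc (0 : ℝ) 1)) C).toReal ≤ 1 / 2 :=
    ENNReal.toReal_le_of_le_ofReal (by norm_num) ((Measure.restrict_le_self C).trans hvol)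
  refine le_trans ?_ (le_iSup_abs_toReal_sub_empFreq _ hC x)
  rw [empFreq_eq_one hn hxC, abs_sub_comm, abs_of_nonneg (by linarith)]
  linarith

lemma prodMeas_eq_one_of_pi_subset {Ω : Type*} [MeasurableSpace Ω] {μ : Measure Ω}
    [IsProbabilityMeasure μ] {s : Set Ω} (hs : μ s = 1) {n : ℕ} {A : Set (Fin n → Ω)}
    (hA : univ.pi (fun _ => s) ⊆ A) : prodMeas μ n A = 1 := by
  have : IsProbabilityMeasure (prodMeas μ n) := by unfold prodMeas; infer_instance
  refine le_antisymm prob_le_one ?_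
  calc (1 : ENNReal) = prodMeas μ n (univ.pi fun _ => s) := by
        simp [prodMeas, Measure.pi_pi, hs]
    _ ≤ prodMeas μ n A := measure_mono hA

lemma not_isGC_of_eventually_eq_one {Ω : Type*} [MeasurableSpace Ω] {μ : Measure Ω}
    {𝒞 : Set (Set Ω)} {ε : ℝ} (hε : 0 < ε)
    (h : ∀ᶠ n in atTop,
      prodMeas μ n {x | ε ≤ ⨆ C ∈ 𝒞, |(μ C).toReal - empFreq C x|} = 1) :
    ¬ IsGC μ 𝒞 := fun hGC =>
  zero_ne_one <| tendsto_nhds_unique ((hGC ε hε).congr' h) tendsto_const_nhds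

theorem stmt18 :
    (∀ n : ℕ, 1 ≤ n →
      prodMeas (volume.restrict (Set.Icc (0 : ℝ) 1)) n
        {x : Fin n → ℝ | (1 : ℝ) / 2 ≤ ⨆ C ∈ IntClassAll,
          |((volume.restrict (Set.Icc (0 : ℝ) 1)) C).toReal - empFreq C x|} = 1) ∧
    ¬ IsGC (volume.restrict (Set.Icc (0 : ℝ) 1)) IntClassAll := by
  have hfull : ∀ n : ℕ, 1 ≤ n →
      prodMeas (volume.restrict (Icc (0 : ℝ) 1)) n
        {x : Fin n → ℝ | (1 : ℝ) / 2 ≤ ⨆ C ∈ IntClassAll,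
          |((volume.restrict (Icc (0 : ℝ) 1)) C).toReal - empFreq C x|} = 1 :=
    fun n hn => prodMeas_eq_one_of_pi_subset (by simp [Real.volume_Icc])
      fun x hx => half_le_iSup_abs_toReal_sub_empFreq (Nat.one_le_iff_ne_zero.mp hn)
        fun i => hx i (mem_univ i)
  exact ⟨hfull, not_isGC_of_eventually_eq_one one_half_pos (eventually_atTop.mpr ⟨1, hfull⟩)⟩
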